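/- (Velocity-component Lipschitz bound.) Assume the small data condition. Then for all (u,θ), (w,z) ∈ V × W, the velocity components of the solution operator satisfy ‖G₁(u,θ) − G₁(w,z)‖_V ≤ ν⁻¹ M (K₁ + K₂) ‖u − w‖_V. -/

import Mathlib

open scoped RealInnerProductSpace

/-!
Both equations of the linearized system have the form `b u x v + ν ⟪x, v⟫ = ℓ v` with a form
`b u` that is skew in its last two arguments. Testing with `v = x` kills the convective term and
bounds `ν ‖x‖` by the size of `ℓ`; subtracting the equations for `(u, θ)` and `(w, z)` and testing
with the difference leaves only `b (u - w)` applied to the second solution and the difference of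
the forcings. This bounds the temperature difference by `κ⁻¹ M ‖u - w‖ ‖G₂ w z‖`, and the velocity
difference by the same kind of term plus the buoyancy forcing `Ri C_P² ‖G₂ u θ - G₂ w z‖`, which
the small data condition `Ri C_P² < min ν κ` absorbs into the temperature estimate.
-/

lemma mul_norm_le_of_mul_inner_self_le {E : Type*} [NormedAddCommGroup E] [InnerProductSpace ℝ E]
    {x : E} {ν C : ℝ} (hC : 0 ≤ C) (h : ν * ⟪x, x⟫ ≤ C * ‖x‖) : ν * ‖x‖ ≤ C := by
  rw [real_inner_self_eq_norm_sq] at h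
  rcases (norm_nonneg x).eq_or_lt with hx | hx
  · simpa [← hx] using hC
  · nlinarith

section AdvectionDiffusion

variable {U E : Type*} [NormedAddCommGroup U] [Module ℝ U]
  [NormedAddCommGroup E] [InnerProductSpace ℝ E]

def SolvesAdvectionDiffusion (b : U →ₗ[ℝ] E →ₗ[ℝ] E →ₗ[ℝ] ℝ) (ν : ℝ) (u : U) (ℓ : E → ℝ)
    (x : E) : Prop :=
  ∀ v, b u x v + ν * ⟪x, v⟫ = ℓ v

variable {b : U →ₗ[ℝ] E →ₗ[ℝ] E →ₗ[ℝ] ℝ} {ν : ℝ} {u w : U} {ℓ ℓ' : E → ℝ} {x y : E}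

namespace SolvesAdvectionDiffusion

lemma mul_norm_le (hb0 : ∀ u v, b u v v = 0) (hx : SolvesAdvectionDiffusion b ν u ℓ x)
    {C : ℝ} (hC : 0 ≤ C) (hℓ : ℓ x ≤ C * ‖x‖) : ν * ‖x‖ ≤ C := by
  refine mul_norm_le_of_mul_inner_self_le hC ?_
  have := hx x
  rw [hb0, zero_add] at this
  rwa [this]

lemma sub_energy_eq (hb0 : ∀ u v, b u v v = 0) (hx : SolvesAdvectionDiffusion b ν u ℓ x)
    (hy : SolvesAdvectionDiffusion b ν w ℓ' y) :
    b (u - w) y (x - y) + ν * ⟪x - y, x - y⟫ = ℓ (x - y) - ℓ' (x - y) := by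
  have hskew := hb0 u (x - y)
  rw [map_sub (b u), LinearMap.sub_apply] at hskew
  rw [← hx, ← hy, map_sub b, LinearMap.sub_apply, LinearMap.sub_apply, inner_sub_left]
  linarith

lemma mul_norm_sub_le (hb0 : ∀ u v, b u v v = 0) {M : ℝ} (hM : 0 ≤ M)
    (hb : ∀ u v w, |b u v w| ≤ M * ‖u‖ * ‖v‖ * ‖w‖)
    (hx : SolvesAdvectionDiffusion b ν u ℓ x) (hy : SolvesAdvectionDiffusion b ν w ℓ' y)
    {D : ℝ} (hD : 0 ≤ D) (hℓ : ℓ (x - y) - ℓ' (x - y) ≤ D * ‖x - y‖) :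
    ν * ‖x - y‖ ≤ M * ‖u - w‖ * ‖y‖ + D := by
  refine mul_norm_le_of_mul_inner_self_le (by positivity) ?_
  have hconv := (neg_le_abs _).trans (hb (u - w) y (x - y))
  linarith [sub_energy_eq hb0 hx hy]

end SolvesAdvectionDiffusion

end AdvectionDiffusion

lemma ContinuousLinearMap.apply_le_opNorm_mul {E : Type*} [NormedAddCommGroup E]
    [NormedSpace ℝ E] (f : E →L[ℝ] ℝ) (x : E) : f x ≤ ‖f‖ * ‖x‖ :=
  (Real.le_norm_self _).trans (f.le_opNorm x)

theorem solution_operator_velocity_lipschitz_general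
    {V W : Type*} [NormedAddCommGroup V] [InnerProductSpace ℝ V]
    [NormedAddCommGroup W] [InnerProductSpace ℝ W]
    (ν κ Ri M CP : ℝ) (hν : 0 < ν) (hκ : 0 < κ) (hRi : 0 < Ri) (hM : 0 < M)
    (b : V →ₗ[ℝ] V →ₗ[ℝ] V →ₗ[ℝ] ℝ)
    (hb0 : ∀ u v : V, b u v v = 0)
    (hb : ∀ u v w : V, |b u v w| ≤ M * ‖u‖ * ‖v‖ * ‖w‖)
    (bs : V →ₗ[ℝ] W →ₗ[ℝ] W →ₗ[ℝ] ℝ)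
    (hbs0 : ∀ (u : V) (φ : W), bs u φ φ = 0)
    (hbs : ∀ (u : V) (φ ψ : W), |bs u φ ψ| ≤ M * ‖u‖ * ‖φ‖ * ‖ψ‖)
    (c : W →ₗ[ℝ] V →ₗ[ℝ] ℝ)
    (hc : ∀ (θ : W) (v : V), |c θ v| ≤ CP ^ 2 * ‖θ‖ * ‖v‖)
    (f : V →L[ℝ] ℝ) (γ : W →L[ℝ] ℝ)
    (G₁ : V → W → V) (G₂ : V → W → W)
    (hG : ∀ (u : V) (θ : W),
      (∀ v : V, b u (G₁ u θ) v + ν * ⟪G₁ u θ, v⟫ = Ri * c (G₂ u θ) v + f v) ∧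
      (∀ χ : W, bs u (G₂ u θ) χ + κ * ⟪G₂ u θ, χ⟫ = γ χ))
    (hsd2 : (min ν κ)⁻¹ * Ri * CP ^ 2 < 1)
    (u w : V) (θ z : W) :
    ‖G₁ u θ - G₁ w z‖ ≤ ν⁻¹ * M * ((Ri * CP ^ 2 * ν⁻¹ * κ⁻¹ * ‖γ‖ + ν⁻¹ * ‖f‖) + (κ⁻¹ * ‖γ‖)) * ‖u - w‖ := by
  obtain ⟨hvel₁, htemp₁⟩ := hG u θ
  obtain ⟨hvel₂, htemp₂⟩ := hG w z
  have hcoupling (t : W) (v : V) : Ri * c t v ≤ Ri * CP ^ 2 * ‖t‖ * ‖v‖ := by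
    have := mul_le_mul_of_nonneg_left ((le_abs_self _).trans (hc t v)) hRi.le
    linarith
  have hRiCP : Ri * CP ^ 2 ≤ κ := by
    have hmin := lt_min hν hκ
    rw [mul_assoc, inv_mul_lt_iff₀ hmin, mul_one] at hsd2
    exact hsd2.le.trans (min_le_right ν κ)
  have htemp : ‖G₂ w z‖ ≤ κ⁻¹ * ‖γ‖ := (le_inv_mul_iff₀ hκ).2 <|
    SolvesAdvectionDiffusion.mul_norm_le hbs0 htemp₂ (norm_nonneg γ) (γ.apply_le_opNorm_mul _)
  have hvel : ν * ‖G₁ w z‖ ≤ Ri * CP ^ 2 * ‖G₂ w z‖ + ‖f‖ :=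
    SolvesAdvectionDiffusion.mul_norm_le hb0 hvel₂ (by positivity) <| by
      linarith [hcoupling (G₂ w z) (G₁ w z), f.apply_le_opNorm_mul (G₁ w z)]
  have hvel' : ‖G₁ w z‖ ≤ Ri * CP ^ 2 * ν⁻¹ * κ⁻¹ * ‖γ‖ + ν⁻¹ * ‖f‖ :=
    calc ‖G₁ w z‖ ≤ ν⁻¹ * (Ri * CP ^ 2 * ‖G₂ w z‖ + ‖f‖) := (le_inv_mul_iff₀ hν).2 hvel
      _ ≤ ν⁻¹ * (Ri * CP ^ 2 * (κ⁻¹ * ‖γ‖) + ‖f‖) := by gcongr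
      _ = Ri * CP ^ 2 * ν⁻¹ * κ⁻¹ * ‖γ‖ + ν⁻¹ * ‖f‖ := by ring
  have htemp_sub : κ * ‖G₂ u θ - G₂ w z‖ ≤ M * ‖u - w‖ * ‖G₂ w z‖ := by
    simpa using SolvesAdvectionDiffusion.mul_norm_sub_le hbs0 hM.le hbs htemp₁ htemp₂ le_rfl
      (by simp)
  have hvel_sub : ν * ‖G₁ u θ - G₁ w z‖ ≤
      M * ‖u - w‖ * ‖G₁ w z‖ + Ri * CP ^ 2 * ‖G₂ u θ - G₂ w z‖ :=
    SolvesAdvectionDiffusion.mul_norm_sub_le hb0 hM.le hb hvel₁ hvel₂ (by positivity) <| by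
      simpa [← mul_sub, ← LinearMap.sub_apply, ← map_sub] using
        hcoupling (G₂ u θ - G₂ w z) (G₁ u θ - G₁ w z)
  rw [mul_assoc, mul_assoc, le_inv_mul_iff₀ hν]
  calc ν * ‖G₁ u θ - G₁ w z‖
      ≤ M * ‖u - w‖ * ‖G₁ w z‖ + κ * ‖G₂ u θ - G₂ w z‖ := hvel_sub.trans (by gcongr)
    _ ≤ M * ‖u - w‖ * (Ri * CP ^ 2 * ν⁻¹ * κ⁻¹ * ‖γ‖ + ν⁻¹ * ‖f‖)
          + M * ‖u - w‖ * (κ⁻¹ * ‖γ‖) := add_le_add (by gcongr) (htemp_sub.trans (by gcongr))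
    _ = M * (((Ri * CP ^ 2 * ν⁻¹ * κ⁻¹ * ‖γ‖ + ν⁻¹ * ‖f‖) + κ⁻¹ * ‖γ‖) * ‖u - w‖) := by ring

/-- Velocity-component Lipschitz bound for the solution operator, under the small
data condition. -/
theorem solution_operator_velocity_lipschitz
    {V W : Type*} [NormedAddCommGroup V] [InnerProductSpace ℝ V] [FiniteDimensional ℝ V]
    [NormedAddCommGroup W] [InnerProductSpace ℝ W] [FiniteDimensional ℝ W]
    (ν κ Ri M CP : ℝ) (hν : 0 < ν) (hκ : 0 < κ) (hRi : 0 < Ri) (hM : 0 < M) (hCP : 0 < CP)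
    (b : V →ₗ[ℝ] V →ₗ[ℝ] V →ₗ[ℝ] ℝ)
    (hb0 : ∀ u v : V, b u v v = 0)
    (hb : ∀ u v w : V, |b u v w| ≤ M * ‖u‖ * ‖v‖ * ‖w‖)
    (bs : V →ₗ[ℝ] W →ₗ[ℝ] W →ₗ[ℝ] ℝ)
    (hbs0 : ∀ (u : V) (φ : W), bs u φ φ = 0)
    (hbs : ∀ (u : V) (φ ψ : W), |bs u φ ψ| ≤ M * ‖u‖ * ‖φ‖ * ‖ψ‖)
    (c : W →ₗ[ℝ] V →ₗ[ℝ] ℝ)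
    (hc : ∀ (θ : W) (v : V), |c θ v| ≤ CP ^ 2 * ‖θ‖ * ‖v‖)
    (f : V →L[ℝ] ℝ) (γ : W →L[ℝ] ℝ)
    (G₁ : V → W → V) (G₂ : V → W → W)
    (hG : ∀ (u : V) (θ : W),
      (∀ v : V, b u (G₁ u θ) v + ν * ⟪G₁ u θ, v⟫ = Ri * c (G₂ u θ) v + f v) ∧
      (∀ χ : W, bs u (G₂ u θ) χ + κ * ⟪G₂ u θ, χ⟫ = γ χ))
    (hsd1 : (min ν κ)⁻¹ ^ 2 * M *
        (2 * (Ri * CP ^ 2 * κ⁻¹ * ‖γ‖ + ‖f‖) + κ⁻¹ ^ 2 * M * ‖γ‖ ^ 2) < 1)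
    (hsd2 : (min ν κ)⁻¹ * Ri * CP ^ 2 < 1)
    (u w : V) (θ z : W) :
    ‖G₁ u θ - G₁ w z‖ ≤ ν⁻¹ * M * ((Ri * CP ^ 2 * ν⁻¹ * κ⁻¹ * ‖γ‖ + ν⁻¹ * ‖f‖) + (κ⁻¹ * ‖γ‖)) * ‖u - w‖ :=
  solution_operator_velocity_lipschitz_general ν κ Ri M CP hν hκ hRi hM b hb0 hb bs hbs0 hbs c hc f
    γ G₁ G₂ hG hsd2 u w θ z
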